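/- If T is a forest with maximum degree Δ ≥ 1 and m edges, then ν_s(T) ≥ m/(2Δ − 1). -/
import Mathlib


open SimpleGraph

/-- An induced matching: a set of edges such that any two vertices incident with
distinct edges have distance at least 2 (i.e. are distinct and non-adjacent). -/
def IsInducedMatching {V : Type} (G : SimpleGraph V) (M : Set (Sym2 V)) : Prop :=
  M ⊆ G.edgeSet ∧
    ∀ e ∈ M, ∀ f ∈ M, e ≠ f → ∀ u ∈ e, ∀ v ∈ f, u ≠ v ∧ ¬ G.Adj u v

/-- The strong matching number: maximum size of an induced matching. -/
noncomputable def nu_s {V : Type} (G : SimpleGraph V) : ℕ :=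
  sSup {k | ∃ M : Set (Sym2 V), IsInducedMatching G M ∧ M.ncard = k}

/-- The number of isolated vertices. -/
noncomputable def isolCount {V : Type} (G : SimpleGraph V) : ℕ :=
  {v : V | ∀ w, ¬ G.Adj v w}.ncard

/-- K₃,₃ (parts {0,1,2} and {3,4,5}) with the edge 0-3 subdivided by the new vertex 6. -/
def K33plus : SimpleGraph (Fin 7) :=
  SimpleGraph.fromEdgeSet
    {s(0,4), s(0,5), s(1,3), s(1,4), s(1,5), s(2,3), s(2,4), s(2,5), s(0,6), s(3,6)}

/-- The number of connected components isomorphic to K₃,₃⁺. -/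
noncomputable def n33plus {V : Type} (G : SimpleGraph V) : ℕ :=
  {c : G.ConnectedComponent | Nonempty (G.induce c.supp ≃g K33plus)}.ncard

section Aux

variable {V : Type} [Fintype V]

/-- In an acyclic graph, if `a` is adjacent to a vertex `y` in the support of a path
starting at `a`, then the edge `s(a,y)` is an edge of that path. -/
lemma edge_mem_of_adj_support {T : SimpleGraph V} (hT : T.IsAcyclic) {a b y : V}
    (p : T.Walk a b) (hp : p.IsPath) (hy : T.Adj a y) (hmem : y ∈ p.support) :
    s(a, y) ∈ p.edges := by
  classical
  have hpath1 : (Walk.cons hy Walk.nil : T.Walk a y).IsPath := by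
    simp [Walk.cons_isPath_iff, hy.ne]
  have h2 : (p.takeUntil y hmem).IsPath := hp.takeUntil hmem
  have heq := isAcyclic_iff_path_unique.mp hT ⟨Walk.cons hy Walk.nil, hpath1⟩
    ⟨p.takeUntil y hmem, h2⟩
  have hw : (Walk.cons hy Walk.nil : T.Walk a y) = p.takeUntil y hmem :=
    Subtype.ext_iff.mp heq
  have : s(a, y) ∈ (p.takeUntil y hmem).edges := by rw [← hw]; simp
  exact p.edges_takeUntil_subset hmem this

/-- On a path of maximum length starting with the edge `a-v`, every neighbor of `a` is `v`. -/
lemma neighbor_eq_of_max_path {T : SimpleGraph V} (hT : T.IsAcyclic) {n : ℕ}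
    (hmax : ∀ (c d : V) (w : T.Walk c d), w.IsPath → w.length ≤ n)
    {a v b : V} (h : T.Adj a v) (q : T.Walk v b)
    (hp : (Walk.cons h q).IsPath) (hlen : (Walk.cons h q).length = n)
    {y : V} (hy : T.Adj a y) : y = v := by
  by_cases hmem : y ∈ (Walk.cons h q).support
  · have he := edge_mem_of_adj_support hT _ hp hy hmem
    rw [Walk.edges_cons] at he
    rcases List.mem_cons.mp he with he | he
    · rcases Sym2.eq_iff.mp he with ⟨-, h1⟩ | ⟨h1, h2⟩
      · exact h1
      · exact absurd h1 h.ne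
    · exact absurd (Walk.fst_mem_support_of_mem_edges q he)
        ((Walk.cons_isPath_iff h q).mp hp).2
  · have hp' : (Walk.cons hy.symm (Walk.cons h q)).IsPath :=
      (Walk.cons_isPath_iff _ _).mpr ⟨hp, hmem⟩
    have hle := hmax _ _ _ hp'
    rw [Walk.length_cons, hlen] at hle
    omega

/-- A finite nonempty forest has an edge `u-v` such that `u` is a leaf, and all neighbors
of `v` other than possibly one vertex `w` (adjacent to `v`) are leaves attached to `v`. -/
lemma exists_deep_leaf {T : SimpleGraph V} (hT : T.IsAcyclic) (hE : T.edgeSet.Nonempty) :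
    ∃ u v w : V, T.Adj u v ∧ T.Adj v w ∧ (∀ y, T.Adj u y → y = v) ∧
      (∀ x, T.Adj v x → x ≠ w → ∀ y, T.Adj x y → y = v) := by
  classical
  obtain ⟨x, y, hxy⟩ : ∃ x y, T.Adj x y := by
    obtain ⟨e, he⟩ := hE
    induction e using Sym2.ind with
    | _ x y => exact ⟨x, y, he⟩
  set L : Set ℕ := {n | ∃ (c d : V) (p : T.Walk c d), p.IsPath ∧ p.length = n} with hL
  have h1 : 1 ∈ L := by
    refine ⟨x, y, Walk.cons hxy Walk.nil, ?_, by simp⟩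
    simp [Walk.cons_isPath_iff, hxy.ne]
  have hbdd : BddAbove L := by
    refine ⟨Fintype.card V, ?_⟩
    rintro n ⟨c, d, p, hp, rfl⟩
    exact hp.length_lt.le
  have hmem := Nat.sSup_mem ⟨1, h1⟩ hbdd
  set n := sSup L with hn
  have hmax : ∀ (c d : V) (w : T.Walk c d), w.IsPath → w.length ≤ n :=
    fun c d p hp => le_csSup hbdd ⟨c, d, p, hp, rfl⟩
  have hn1 : 1 ≤ n := le_csSup hbdd h1
  obtain ⟨c, d, p, hp, hlen⟩ := hmem
  cases p with
  | nil => simp at hlen; omega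
  | @cons _ v₀ _ h q =>
    have claimA : ∀ y, T.Adj c y → y = v₀ :=
      fun y hy => neighbor_eq_of_max_path hT hmax h q hp hlen hy
    cases q with
    | nil =>
      refine ⟨c, _, c, h, h.symm, claimA, ?_⟩
      intro x hx hxw
      have hp' : (Walk.cons h.symm (Walk.nil : T.Walk c c)).IsPath := by
        simp [Walk.cons_isPath_iff, h.ne']
      have hlen' : (Walk.cons h.symm (Walk.nil : T.Walk c c)).length = n := by
        simpa using hlen
      exact absurd (neighbor_eq_of_max_path hT hmax h.symm Walk.nil hp' hlen' hx) hxw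
    | @cons _ w₀ _ h2 r =>
      refine ⟨c, v₀, w₀, h, h2, claimA, ?_⟩
      intro x hvx hxw
      by_cases hxc : x = c
      · subst hxc; exact claimA
      · have hq' : (Walk.cons h2 r).IsPath := hp.of_cons
        have hxq : x ∉ (Walk.cons h2 r).support := by
          intro hmem'
          have he := edge_mem_of_adj_support hT _ hq' hvx hmem'
          rw [Walk.edges_cons] at he
          rcases List.mem_cons.mp he with he | he
          · rcases Sym2.eq_iff.mp he with ⟨-, h1'⟩ | ⟨h1', h2'⟩
            · exact hxw h1'
            · exact h2.ne h1'
          · exact ((Walk.cons_isPath_iff h2 r).mp hq').2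
              (Walk.fst_mem_support_of_mem_edges r he)
        have hp' : (Walk.cons hvx.symm (Walk.cons h2 r)).IsPath :=
          (Walk.cons_isPath_iff _ _).mpr ⟨hq', hxq⟩
        have hlen' : (Walk.cons hvx.symm (Walk.cons h2 r)).length = n := by
          rw [Walk.length_cons]
          rw [Walk.length_cons] at hlen
          omega
        exact fun y hy => neighbor_eq_of_max_path hT hmax hvx.symm _ hp' hlen' hy

lemma matching_set_bdd (G : SimpleGraph V) :
    BddAbove {k | ∃ M : Set (Sym2 V), IsInducedMatching G M ∧ M.ncard = k} := by
  refine ⟨(Set.univ : Set (Sym2 V)).ncard, ?_⟩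
  rintro k ⟨M, hM, rfl⟩
  exact Set.ncard_le_ncard (Set.subset_univ M) Set.finite_univ

lemma matching_set_nonempty (G : SimpleGraph V) :
    Set.Nonempty {k | ∃ M : Set (Sym2 V), IsInducedMatching G M ∧ M.ncard = k} :=
  ⟨0, ∅, ⟨Set.empty_subset _, fun e he => absurd he (Set.notMem_empty e)⟩, by simp⟩

lemma exists_max_matching (G : SimpleGraph V) :
    ∃ M : Set (Sym2 V), IsInducedMatching G M ∧ M.ncard = nu_s G :=
  Nat.sSup_mem (matching_set_nonempty G) (matching_set_bdd G)

lemma le_nu_s (G : SimpleGraph V) {M : Set (Sym2 V)} (hM : IsInducedMatching G M) :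
    M.ncard ≤ nu_s G :=
  le_csSup (matching_set_bdd G) ⟨M, hM, rfl⟩

lemma main_aux : ∀ (m : ℕ) (T : SimpleGraph V), T.IsAcyclic → ∀ (Δ : ℕ), 1 ≤ Δ →
    (∀ v, (T.neighborSet v).ncard ≤ Δ) → T.edgeSet.ncard = m →
    (nu_s T : ℚ) ≥ (m : ℚ) / (2 * (Δ : ℚ) - 1) := by
  intro m
  induction m using Nat.strong_induction_on with
  | _ m ih =>
  intro T hT Δ hΔ hdeg hm
  have hΔQ : (1 : ℚ) ≤ (Δ : ℚ) := by exact_mod_cast hΔ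
  have hd : (0 : ℚ) < 2 * (Δ : ℚ) - 1 := by linarith
  by_cases hE : T.edgeSet.Nonempty
  · obtain ⟨u, v, w, huv, hvw, hu, hv⟩ := exists_deep_leaf hT hE
    classical
    set S : Set (Sym2 V) := T.incidenceSet v ∪ T.incidenceSet w with hS
    set T' := T.deleteEdges S with hT'def
    have hTE' : T'.edgeSet = T.edgeSet \ S := T.edgeSet_deleteEdges S
    have hSsub : S ⊆ T.edgeSet :=
      Set.union_subset (T.incidenceSet_subset v) (T.incidenceSet_subset w)
    have hincv : (T.incidenceSet v).ncard ≤ Δ := by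
      rw [← Nat.card_coe_set_eq, Nat.card_congr (T.incidenceSetEquivNeighborSet v),
        Nat.card_coe_set_eq]
      exact hdeg v
    have hincw : (T.incidenceSet w).ncard ≤ Δ := by
      rw [← Nat.card_coe_set_eq, Nat.card_congr (T.incidenceSetEquivNeighborSet w),
        Nat.card_coe_set_eq]
      exact hdeg w
    have hScard : S.ncard + 1 ≤ 2 * Δ := by
      have hun := Set.ncard_union_add_ncard_inter (T.incidenceSet v) (T.incidenceSet w)
      rw [← hS] at hun
      have hint : 0 < (T.incidenceSet v ∩ T.incidenceSet w).ncard := by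
        rw [Set.ncard_pos]
        exact ⟨s(v, w), T.mk'_mem_incidenceSet_left_iff.mpr hvw,
          T.mk'_mem_incidenceSet_right_iff.mpr hvw⟩
      omega
    have hm' : T'.edgeSet.ncard + S.ncard = m := by
      rw [hTE', Set.ncard_diff_add_ncard_of_subset hSsub]
      exact hm
    have hSpos : 0 < S.ncard := by
      rw [Set.ncard_pos]
      exact ⟨s(u, v), Or.inl (T.mk'_mem_incidenceSet_right_iff.mpr huv)⟩
    have hmlt : T'.edgeSet.ncard < m := by omega
    have hT'acyclic : T'.IsAcyclic :=
      fun x c hc => hT (c.mapLe (T.deleteEdges_le S)) (hc.mapLe _)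
    have hdeg' : ∀ x, (T'.neighborSet x).ncard ≤ Δ := by
      intro x
      refine le_trans (Set.ncard_le_ncard ?_ (Set.toFinite _)) (hdeg x)
      intro y hy
      exact (T.deleteEdges_le S) hy
    have IH := ih _ hmlt T' hT'acyclic Δ hΔ hdeg' rfl
    obtain ⟨M', hM', hMcard⟩ := exists_max_matching T'
    have hend : ∀ f ∈ M', ∀ b, b ∈ f →
        b ≠ u ∧ b ≠ v ∧ b ≠ w ∧ ¬T.Adj u b ∧ ¬T.Adj v b := by
      intro f hf b hb
      have hfE : f ∈ T.edgeSet \ S := hTE' ▸ hM'.1 hf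
      have hbv : b ≠ v := fun h' => hfE.2 (Or.inl ⟨hfE.1, h' ▸ hb⟩)
      have hbw : b ≠ w := fun h' => hfE.2 (Or.inr ⟨hfE.1, h' ▸ hb⟩)
      obtain ⟨c, hfc⟩ : ∃ c, f = s(b, c) := Sym2.mem_iff_exists.mp hb
      have hbc : T.Adj b c := by
        have := hfE.1
        rw [hfc, mem_edgeSet] at this
        exact this
      have hbu : b ≠ u := by
        intro h'; subst h'
        have hcv : c = v := hu c hbc
        exact hfE.2 (Or.inl ⟨hfE.1, by rw [hfc, hcv]; simp⟩)
      have hvb : ¬T.Adj v b := by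
        intro hadj
        have hcv : c = v := hv b hadj hbw c hbc
        exact hfE.2 (Or.inl ⟨hfE.1, by rw [hfc, hcv]; simp⟩)
      have hub : ¬T.Adj u b := fun hadj => hbv (hu b hadj)
      exact ⟨hbu, hbv, hbw, hub, hvb⟩
    have hsuvS : s(u, v) ∈ S := Or.inl (T.mk'_mem_incidenceSet_right_iff.mpr huv)
    have hnotmem : s(u, v) ∉ M' := fun hmem => (hTE' ▸ hM'.1 hmem).2 hsuvS
    have hMT : IsInducedMatching T (insert s(u, v) M') := by
      constructor
      · intro e he
        rcases Set.mem_insert_iff.mp he with rfl | he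
        · exact T.mem_edgeSet.mpr huv
        · exact (hTE' ▸ hM'.1 he).1
      · intro e he f hf hef a ha b hb
        rcases Set.mem_insert_iff.mp he with rfl | he <;>
          rcases Set.mem_insert_iff.mp hf with rfl | hf
        · exact absurd rfl hef
        · obtain ⟨hbu, hbv, -, hub, hvb⟩ := hend f hf b hb
          rcases Sym2.mem_iff.mp ha with rfl | rfl
          · exact ⟨fun h' => hbu h'.symm, hub⟩
          · exact ⟨fun h' => hbv h'.symm, hvb⟩
        · obtain ⟨hau, hav, -, hua, hva⟩ := hend e he a ha
          rcases Sym2.mem_iff.mp hb with rfl | rfl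
          · exact ⟨hau, fun h' => hua h'.symm⟩
          · exact ⟨hav, fun h' => hva h'.symm⟩
        · have hM'pair := hM'.2 e he f hf hef a ha b hb
          refine ⟨hM'pair.1, fun hadj => ?_⟩
          have hnS : s(a, b) ∉ S := by
            rintro (⟨-, hmem⟩ | ⟨-, hmem⟩)
            · rcases Sym2.mem_iff.mp hmem with h' | h'
              · exact (hend e he a ha).2.1 h'.symm
              · exact (hend f hf b hb).2.1 h'.symm
            · rcases Sym2.mem_iff.mp hmem with h' | h'
              · exact (hend e he a ha).2.2.1 h'.symm
              · exact (hend f hf b hb).2.2.1 h'.symm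
          exact hM'pair.2 (by rw [hT'def, deleteEdges_adj]; exact ⟨hadj, hnS⟩)
    have hMcard2 : (insert s(u, v) M').ncard = nu_s T' + 1 := by
      rw [Set.ncard_insert_of_notMem hnotmem (Set.toFinite _), hMcard]
    have hnu : nu_s T' + 1 ≤ nu_s T := by
      have := le_nu_s T hMT
      rwa [hMcard2] at this
    have hnuQ : (nu_s T' : ℚ) + 1 ≤ (nu_s T : ℚ) := by exact_mod_cast hnu
    have c2 : (S.ncard : ℚ) ≤ 2 * (Δ : ℚ) - 1 := by
      have : (S.ncard : ℚ) + 1 ≤ 2 * (Δ : ℚ) := by exact_mod_cast hScard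
      linarith
    have hmQ : (m : ℚ) = (T'.edgeSet.ncard : ℚ) + (S.ncard : ℚ) := by exact_mod_cast hm'.symm
    rw [ge_iff_le, hmQ, add_div]
    have hdivS : (S.ncard : ℚ) / (2 * (Δ : ℚ) - 1) ≤ 1 := (div_le_one hd).mpr c2
    linarith [IH]
  · rw [Set.not_nonempty_iff_eq_empty] at hE
    have : m = 0 := by rw [← hm, hE, Set.ncard_empty]
    subst this
    simp only [Nat.cast_zero, zero_div, ge_iff_le]
    positivity

end Aux

/-- A forest with maximum degree Δ ≥ 1 and m edges satisfies ν_s ≥ m/(2Δ − 1). -/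
theorem stmt_14 {V : Type} [Fintype V] (T : SimpleGraph V) (hT : T.IsAcyclic)
    (Δ : ℕ) (hΔ : 1 ≤ Δ) (hdeg : ∀ v, (T.neighborSet v).ncard ≤ Δ) :
    (nu_s T : ℚ) ≥ (T.edgeSet.ncard : ℚ) / (2 * (Δ : ℚ) - 1) := by
  exact main_aux _ T hT Δ hΔ hdeg rfl
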